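/- arXiv:1308.3506 — 7 statements merged into one kernel-verified Lean document; each statement's English description precedes it below -/
import Mathlib

section
/- For every joint strategy σ and every utility vector w ∈ ℝ^d, the internal regret lower-bounds the swap regret, and the swap regret is at most A times the internal regret: Regret_{Φ^int}(σ|w) ≤ Regret_{Φ^swap}(σ|w) ≤ A · Regret_{Φ^int}(σ|w). In particular, if σ has internal regret at most ε under w, then σ is an Aε-correlated equilibrium under w. -/
open scoped BigOperators

/-- Dot product on `ℝ^d`. -/
def dot {d : ℕ} (x w : Fin d → ℝ) : ℝ := ∑ k, x k * w k

section Game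

variable {d : ℕ} {N : Type} [Fintype N] [Nonempty N] [DecidableEq N]
variable {A : N → Type} [∀ i, Fintype (A i)] [∀ i, Nonempty (A i)] [∀ i, DecidableEq (A i)]

/-- The outcome obtained from `a` when player `i` applies deviation `f`. -/
def devOutcome (i : N) (f : A i → A i) (a : ∀ j, A j) : ∀ j, A j :=
  Function.update a i (f (a i))

/-- Expected regret of deviation `f` of player `i` under joint strategy `σ` and
utility vector `w`. -/
def expRegret (u : ∀ i : N, (∀ j, A j) → Fin d → ℝ) (σ : (∀ j, A j) → ℝ)
    (w : Fin d → ℝ) (i : N) (f : A i → A i) : ℝ :=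
  ∑ a, σ a * dot (u i (devOutcome i f a) - u i a) w

/-- Swap regret: maximal expected regret over all deviations `f : A i → A i`. -/
noncomputable def swapRegret (u : ∀ i : N, (∀ j, A j) → Fin d → ℝ)
    (σ : (∀ j, A j) → ℝ) (w : Fin d → ℝ) : ℝ :=
  ⨆ p : Σ i : N, (A i → A i), expRegret u σ w p.1 p.2

/-- The switch deviation `switch^{x→y}_i`. -/
def switchDev (i : N) (x y : A i) : A i → A i := fun z => if z = x then y else z

/-- Internal regret: maximal expected regret over all switch deviations. -/
noncomputable def intRegret (u : ∀ i : N, (∀ j, A j) → Fin d → ℝ)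
    (σ : (∀ j, A j) → ℝ) (w : Fin d → ℝ) : ℝ :=
  ⨆ p : Σ i : N, A i × A i, expRegret u σ w p.1 (switchDev p.1 p.2.1 p.2.2)

/-- `A = max_i |A_i|`. -/
def maxActions (N : Type) [Fintype N] (A : N → Type) [∀ i, Fintype (A i)] : ℕ :=
  Finset.univ.sup fun i => Fintype.card (A i)

/-- Internal regret lower-bounds swap regret, swap regret is at most `A` times the
internal regret and, in particular, `ε` internal regret implies an
`Aε`-correlated equilibrium. -/
theorem internal_swap_regret_bounds
    (u : ∀ i : N, (∀ j, A j) → Fin d → ℝ) (σ : (∀ j, A j) → ℝ)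
    (hσ : ∀ a, 0 ≤ σ a) (hσ1 : ∑ a, σ a = 1)
    (w : Fin d → ℝ) (ε : ℝ) :
    intRegret u σ w ≤ swapRegret u σ w ∧
    swapRegret u σ w ≤ (maxActions N A : ℝ) * intRegret u σ w ∧
    (intRegret u σ w ≤ ε → swapRegret u σ w ≤ (maxActions N A : ℝ) * ε) := by
  classical
  haveI : Nonempty ((i : N) × (A i → A i)) := ⟨⟨Classical.arbitrary N, id⟩⟩
  haveI : Nonempty ((i : N) × A i × A i) :=
    ⟨⟨Classical.arbitrary N, Classical.arbitrary _, Classical.arbitrary _⟩⟩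
  have hbddS : BddAbove (Set.range fun p : Σ i : N, (A i → A i) =>
      expRegret u σ w p.1 p.2) := (Set.finite_range _).bddAbove
  have hbddI : BddAbove (Set.range fun p : Σ i : N, A i × A i =>
      expRegret u σ w p.1 (switchDev p.1 p.2.1 p.2.2)) := (Set.finite_range _).bddAbove
  have hzero : ∀ (i : N) (x : A i), expRegret u σ w i (switchDev i x x) = 0 := by
    intro i x
    unfold expRegret devOutcome switchDev
    refine Finset.sum_eq_zero fun a _ => ?_
    have h : (if a i = x then x else a i) = a i := by split <;> simp_all
    simp [h, dot]
  have hint0 : 0 ≤ intRegret u σ w := by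
    obtain ⟨i⟩ := (inferInstance : Nonempty N)
    obtain ⟨x⟩ := (inferInstance : Nonempty (A i))
    have h := le_ciSup hbddI (⟨i, x, x⟩ : Σ i : N, A i × A i)
    rw [hzero i x] at h
    exact h
  have hdecomp : ∀ (i : N) (f : A i → A i),
      expRegret u σ w i f = ∑ x : A i, expRegret u σ w i (switchDev i x (f x)) := by
    intro i f
    unfold expRegret
    rw [Finset.sum_comm]
    refine Finset.sum_congr rfl fun a _ => ?_
    rw [Finset.sum_eq_single (a i)]
    · congr 2
      unfold devOutcome switchDev
      simp
    · intro x _ hx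
      have h1 : devOutcome i (switchDev i x (f x)) a = a := by
        unfold devOutcome switchDev
        simp [Ne.symm hx]
      simp [h1, dot]
    · simp
  have hle : ∀ (i : N) (f : A i → A i),
      expRegret u σ w i f ≤ (maxActions N A : ℝ) * intRegret u σ w := by
    intro i f
    rw [hdecomp i f]
    calc ∑ x : A i, expRegret u σ w i (switchDev i x (f x))
        ≤ ∑ _x : A i, intRegret u σ w := Finset.sum_le_sum fun x _ =>
          le_ciSup hbddI (⟨i, x, f x⟩ : Σ i : N, A i × A i)
      _ = (Fintype.card (A i) : ℝ) * intRegret u σ w := by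
          rw [Finset.sum_const, Finset.card_univ, nsmul_eq_mul]
      _ ≤ (maxActions N A : ℝ) * intRegret u σ w := by
          refine mul_le_mul_of_nonneg_right ?_ hint0
          exact_mod_cast Finset.le_sup (f := fun i => Fintype.card (A i))
            (Finset.mem_univ i)
  have h2 : swapRegret u σ w ≤ (maxActions N A : ℝ) * intRegret u σ w :=
    ciSup_le fun p => hle p.1 p.2
  have h1 : intRegret u σ w ≤ swapRegret u σ w :=
    ciSup_le fun p => le_ciSup hbddS (⟨p.1, switchDev p.1 p.2.1 p.2.2⟩ : Σ i : N, A i → A i)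
  refine ⟨h1, h2, fun hε => h2.trans ?_⟩
  exact mul_le_mul_of_nonneg_left hε (Nat.cast_nonneg _)

end Game
end

section
/- A prediction σ̂ is strongly rational with respect to a deviation set Φ relative to σ if and only if it satisfies the standard ICE polytope relative to σ: for every deviation f ∈ Φ, the expected regret feature vector r(f,σ̂) lies in the convex hull of the set {r(g,σ) : g ∈ Φ} ⊆ ℝ^d (equivalently, for every f ∈ Φ there exists a probability distribution η_f on Φ with r(f,σ̂) = Σ_{g∈Φ} η_f(g) r(g,σ)). -/
open scoped BigOperators

/-- `σ` is a probability distribution on the finite set `A`. -/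
def IsProb {A : Type} [Fintype A] (σ : A → ℝ) : Prop :=
  (∀ a, 0 ≤ σ a) ∧ ∑ a, σ a = 1

/-- Expected regret features of deviation `f` under distribution `σ`. -/
def expFeat {d : ℕ} {A Φ : Type} [Fintype A] (r : Φ → A → Fin d → ℝ)
    (σ : A → ℝ) (f : Φ) : Fin d → ℝ := ∑ a, σ a • r f a

/-- `Regret_Φ(σ|w) = max_{f ∈ Φ} ⟨r(f,σ), w⟩`. -/
noncomputable def Regret {d : ℕ} {A Φ : Type} [Fintype A] [Fintype Φ] [Nonempty Φ]
    (r : Φ → A → Fin d → ℝ) (σ : A → ℝ) (w : Fin d → ℝ) : ℝ :=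
  ⨆ f : Φ, dot (expFeat r σ f) w

/-!
With `K` the convex hull of the finitely many points `r(g, σ)`, we have
`Regret_Φ(σ|w) = max_{x ∈ K} ⟨x, w⟩`, the support function of `K`, and a point lies in `K` iff
it satisfies all the half-space inequalities `⟨x, w⟩ ≤ max_K ⟨·, w⟩`: a point outside the
compact convex set `K` is strictly separated from it by a hyperplane, whose normal `w` violates
the inequality. Swapping the quantifiers over `f` and `w` gives the equivalence.
-/

lemma isLinearMap_dot_left {d : ℕ} (w : Fin d → ℝ) :
    IsLinearMap ℝ (fun x : Fin d → ℝ => dot x w) where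
  map_add x y := by simp only [dot, Pi.add_apply, add_mul, Finset.sum_add_distrib]
  map_smul c x := by simp only [dot, Pi.smul_apply, smul_eq_mul, Finset.mul_sum, mul_assoc]

lemma ContinuousLinearMap.apply_eq_dot {d : ℕ} (φ : (Fin d → ℝ) →L[ℝ] ℝ) (x : Fin d → ℝ) :
    φ x = dot x (fun k => φ (Pi.single k 1)) := by
  conv_lhs => rw [pi_eq_sum_univ x]
  simp only [map_sum, map_smul, smul_eq_mul, dot]
  refine Finset.sum_congr rfl fun k _ => ?_
  congr 2
  funext j
  simp [Pi.single_apply, eq_comm]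

lemma mem_convexHull_range_iff_forall_dot_le_iSup {d : ℕ} {ι : Type*} [Finite ι] [Nonempty ι]
    (v : ι → Fin d → ℝ) (x : Fin d → ℝ) :
    x ∈ convexHull ℝ (Set.range v) ↔ ∀ w, dot x w ≤ ⨆ i, dot (v i) w := by
  have hbdd : ∀ w, BddAbove (Set.range fun i => dot (v i) w) :=
    fun w => (Set.finite_range _).bddAbove
  constructor
  · intro hx w
    have hsub : convexHull ℝ (Set.range v) ⊆ {y | dot y w ≤ ⨆ i, dot (v i) w} :=
      convexHull_min (Set.range_subset_iff.2 fun i => le_ciSup (hbdd w) i)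
        (convex_halfSpace_le (isLinearMap_dot_left w) _)
    exact hsub hx
  · intro h
    by_contra hx
    obtain ⟨φ, u, hlt, hgt⟩ := geometric_hahn_banach_closed_point (convex_convexHull ℝ _)
      ((Set.finite_range v).isClosed_convexHull (𝕜 := ℝ)) hx
    have hsup : ⨆ i, dot (v i) (fun k => φ (Pi.single k 1)) ≤ u := ciSup_le fun i => by
      rw [← φ.apply_eq_dot]
      exact (hlt _ (subset_convexHull ℝ _ ⟨i, rfl⟩)).le
    have := h fun k => φ (Pi.single k 1)
    rw [← φ.apply_eq_dot] at this
    linarith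

theorem strongly_rational_iff_standard_ICE_general
    {d : ℕ} {A Φ : Type} [Fintype A] [Fintype Φ] [Nonempty Φ]
    (r : Φ → A → Fin d → ℝ) (σ σhat : A → ℝ) :
    (∀ w : Fin d → ℝ, Regret r σhat w ≤ Regret r σ w) ↔
      (∀ f : Φ, expFeat r σhat f ∈ convexHull ℝ (Set.range (expFeat r σ))) := by
  simp only [Regret, ciSup_le_iff (Set.finite_range _).bddAbove,
    mem_convexHull_range_iff_forall_dot_le_iSup]
  exact forall_comm

/-- Strong rationality is equivalent to membership in the standard ICE polytope:
for every deviation `f`, the expected regret features of `σ̂` lie in the convex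
hull of the expected regret features of `σ`. -/
theorem strongly_rational_iff_standard_ICE
    {d : ℕ} {A Φ : Type} [Fintype A] [Nonempty A] [Fintype Φ] [Nonempty Φ]
    (r : Φ → A → Fin d → ℝ) (σ σhat : A → ℝ)
    (hσ : IsProb σ) (hσhat : IsProb σhat) :
    (∀ w : Fin d → ℝ, Regret r σhat w ≤ Regret r σ w) ↔
      (∀ f : Φ, expFeat r σhat f ∈ convexHull ℝ (Set.range (expFeat r σ))) :=
  strongly_rational_iff_standard_ICE_general r σ σhat
end

section
/- Let Γ be a two-player game with players x and y that is constant-sum under w ∈ ℝ^d, i.e., there is a constant C with ⟨u_x(a), w⟩ + ⟨u_y(a), w⟩ = C for every outcome a. If a joint strategy σ on A_x × A_y has external regret at most ε under w (Regret_{Φ^ext}(σ|w) ≤ ε), then the profile of marginal strategies (σ̄_x, σ̄_y) is a 2ε-Nash equilibrium under w: for every mixed strategy s_x on A_x, u_x(s_x, σ̄_y | w) − u_x(σ̄_x, σ̄_y | w) ≤ 2ε, and symmetrically for every mixed strategy s_y on A_y, u_y(σ̄_x, s_y | w) − u_y(σ̄_x, σ̄_y | w) ≤ 2ε, where u_i(s_x,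 s_y | w) = Σ_{(a_x,a_y)} s_x(a_x) s_y(a_y) ⟨u_i(a_x,a_y), w⟩. -/
open scoped BigOperators

section TwoPlayer

variable {d : ℕ} {Ax Ay : Type} [Fintype Ax] [Fintype Ay] [Nonempty Ax] [Nonempty Ay]

/-- Marginal strategy of player `x` under joint strategy `σ`. -/
def margX (σ : Ax × Ay → ℝ) : Ax → ℝ := fun a => ∑ b, σ (a, b)

/-- Marginal strategy of player `y` under joint strategy `σ`. -/
def margY (σ : Ax × Ay → ℝ) : Ay → ℝ := fun b => ∑ a, σ (a, b)

/-- Expected utility of the profile `(sx, sy)` for utility features `u` under `w`. -/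
def profUtil (u : Ax × Ay → Fin d → ℝ) (sx : Ax → ℝ) (sy : Ay → ℝ)
    (w : Fin d → ℝ) : ℝ :=
  ∑ p : Ax × Ay, sx p.1 * sy p.2 * dot (u p) w

/-- Regret features of the external (fixed) deviations: `Sum.inl b` is the fixed
deviation of player `x` to `b`, `Sum.inr b` the fixed deviation of player `y` to `b`. -/
def extFeat (ux uy : Ax × Ay → Fin d → ℝ) : Ax ⊕ Ay → Ax × Ay → Fin d → ℝ
  | Sum.inl b => fun a => ux (b, a.2) - ux a
  | Sum.inr b => fun a => uy (a.1, b) - uy a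

lemma sum_prod_margY (σ : Ax × Ay → ℝ) (c : Ay → ℝ) :
    ∑ p : Ax × Ay, σ p * c p.2 = ∑ b, margY σ b * c b := by
  simp only [margY, Finset.sum_mul]
  rw [Fintype.sum_prod_type_right]

lemma sum_prod_margX (σ : Ax × Ay → ℝ) (c : Ax → ℝ) :
    ∑ p : Ax × Ay, σ p * c p.1 = ∑ a, margX σ a * c a := by
  simp only [margX, Finset.sum_mul]
  rw [Fintype.sum_prod_type]

lemma profUtil_eqX (u : Ax × Ay → Fin d → ℝ) (sx : Ax → ℝ) (sy : Ay → ℝ) (w : Fin d → ℝ) :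
    profUtil u sx sy w = ∑ a, sx a * ∑ b, sy b * dot (u (a, b)) w := by
  simp only [profUtil, Fintype.sum_prod_type, Finset.mul_sum, mul_assoc]

lemma profUtil_eqY (u : Ax × Ay → Fin d → ℝ) (sx : Ax → ℝ) (sy : Ay → ℝ) (w : Fin d → ℝ) :
    profUtil u sx sy w = ∑ b, sy b * ∑ a, sx a * dot (u (a, b)) w := by
  simp only [profUtil, Fintype.sum_prod_type_right, Finset.mul_sum]
  refine Finset.sum_congr rfl fun b _ => Finset.sum_congr rfl fun a _ => by ring

/-- In a two-player constant-sum game, if the joint strategy `σ` has external regret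
at most `ε` under `w`, then the profile of its marginal strategies is a `2ε`-Nash
equilibrium under `w`. -/
theorem low_external_regret_marginals_are_approx_nash
    (ux uy : Ax × Ay → Fin d → ℝ) (w : Fin d → ℝ) (C : ℝ)
    (hconst : ∀ a : Ax × Ay, dot (ux a) w + dot (uy a) w = C)
    (σ : Ax × Ay → ℝ) (hσ : ∀ a, 0 ≤ σ a) (hσ1 : ∑ a, σ a = 1)
    (ε : ℝ)
    (hreg : (⨆ f : Ax ⊕ Ay, ∑ a, σ a * dot (extFeat ux uy f a) w) ≤ ε) :
    (∀ sx : Ax → ℝ, (∀ a, 0 ≤ sx a) → ∑ a, sx a = 1 →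
      profUtil ux sx (margY σ) w - profUtil ux (margX σ) (margY σ) w ≤ 2 * ε) ∧
    (∀ sy : Ay → ℝ, (∀ b, 0 ≤ sy b) → ∑ b, sy b = 1 →
      profUtil uy (margX σ) sy w - profUtil uy (margX σ) (margY σ) w ≤ 2 * ε) := by
  classical
  set Vx := ∑ a, σ a * dot (ux a) w with hVx
  set Vy := ∑ a, σ a * dot (uy a) w with hVy
  have hdot_sub : ∀ (x y : Fin d → ℝ), dot (x - y) w = dot x w - dot y w := by
    intro x y; simp [dot, sub_mul, Finset.sum_sub_distrib]
  have hbdd : BddAbove (Set.range fun f : Ax ⊕ Ay => ∑ a, σ a * dot (extFeat ux uy f a) w) :=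
    (Set.finite_range _).bddAbove
  have hf : ∀ f, ∑ a, σ a * dot (extFeat ux uy f a) w ≤ ε :=
    fun f => (le_ciSup hbdd f).trans hreg
  -- marginals are distributions
  have hmX0 : ∀ a, 0 ≤ margX σ a := fun a => Finset.sum_nonneg fun b _ => hσ _
  have hmY0 : ∀ b, 0 ≤ margY σ b := fun b => Finset.sum_nonneg fun a _ => hσ _
  have hmX1 : ∑ a, margX σ a = 1 := by
    rw [← hσ1, Fintype.sum_prod_type]; rfl
  have hmY1 : ∑ b, margY σ b = 1 := by
    rw [← hσ1, Fintype.sum_prod_type_right]; rfl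
  -- pure deviation bounds
  have hX : ∀ b : Ax, ∑ b2, margY σ b2 * dot (ux (b, b2)) w ≤ Vx + ε := by
    intro b
    have h := hf (Sum.inl b)
    simp only [extFeat] at h
    have h1 : ∑ a : Ax × Ay, σ a * dot (ux (b, a.2) - ux a) w
        = (∑ b2, margY σ b2 * dot (ux (b, b2)) w) - Vx := by
      simp only [hdot_sub, mul_sub, Finset.sum_sub_distrib, hVx]
      rw [sum_prod_margY σ (fun b2 => dot (ux (b, b2)) w)]
    linarith [h1 ▸ h]
  have hY : ∀ b : Ay, ∑ a, margX σ a * dot (uy (a, b)) w ≤ Vy + ε := by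
    intro b
    have h := hf (Sum.inr b)
    simp only [extFeat] at h
    have h1 : ∑ a : Ax × Ay, σ a * dot (uy (a.1, b) - uy a) w
        = (∑ a, margX σ a * dot (uy (a, b)) w) - Vy := by
      simp only [hdot_sub, mul_sub, Finset.sum_sub_distrib, hVy]
      rw [sum_prod_margX σ (fun a => dot (uy (a, b)) w)]
    linarith [h1 ▸ h]
  -- mixed deviation bounds
  have hXmix : ∀ sx : Ax → ℝ, (∀ a, 0 ≤ sx a) → ∑ a, sx a = 1 →
      profUtil ux sx (margY σ) w ≤ Vx + ε := by
    intro sx h0 h1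
    rw [profUtil_eqX]
    calc ∑ a, sx a * ∑ b, margY σ b * dot (ux (a, b)) w
        ≤ ∑ a, sx a * (Vx + ε) :=
          Finset.sum_le_sum fun a _ => mul_le_mul_of_nonneg_left (hX a) (h0 a)
      _ = Vx + ε := by rw [← Finset.sum_mul, h1, one_mul]
  have hYmix : ∀ sy : Ay → ℝ, (∀ b, 0 ≤ sy b) → ∑ b, sy b = 1 →
      profUtil uy (margX σ) sy w ≤ Vy + ε := by
    intro sy h0 h1
    rw [profUtil_eqY]
    calc ∑ b, sy b * ∑ a, margX σ a * dot (uy (a, b)) w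
        ≤ ∑ b, sy b * (Vy + ε) :=
          Finset.sum_le_sum fun b _ => mul_le_mul_of_nonneg_left (hY b) (h0 b)
      _ = Vy + ε := by rw [← Finset.sum_mul, h1, one_mul]
  -- constant sum facts
  have hVsum : Vx + Vy = C := by
    rw [hVx, hVy, ← Finset.sum_add_distrib]
    calc ∑ a, (σ a * dot (ux a) w + σ a * dot (uy a) w)
        = ∑ a, σ a * C := by
          refine Finset.sum_congr rfl fun a _ => ?_
          rw [← mul_add, hconst a]
      _ = C := by rw [← Finset.sum_mul, hσ1, one_mul]
  have hPsum : profUtil ux (margX σ) (margY σ) w + profUtil uy (margX σ) (margY σ) w = C := by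
    simp only [profUtil, ← Finset.sum_add_distrib]
    calc ∑ p : Ax × Ay, (margX σ p.1 * margY σ p.2 * dot (ux p) w
          + margX σ p.1 * margY σ p.2 * dot (uy p) w)
        = ∑ p : Ax × Ay, margX σ p.1 * margY σ p.2 * C := by
          refine Finset.sum_congr rfl fun p _ => ?_
          rw [← mul_add, hconst p]
      _ = (∑ a, margX σ a) * (∑ b, margY σ b) * C := by
          rw [Finset.sum_mul_sum, Finset.sum_mul, Fintype.sum_prod_type]
          simp [Finset.sum_mul]
      _ = C := by rw [hmX1, hmY1, one_mul, one_mul]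
  have hXlow : Vx - ε ≤ profUtil ux (margX σ) (margY σ) w := by
    have := hYmix (margY σ) hmY0 hmY1
    linarith
  have hYlow : Vy - ε ≤ profUtil uy (margX σ) (margY σ) w := by
    have := hXmix (margX σ) hmX0 hmX1
    linarith
  refine ⟨fun sx h0 h1 => ?_, fun sy h0 h1 => ?_⟩
  · have := hXmix sx h0 h1; linarith
  · have := hYmix sy h0 h1; linarith

end TwoPlayer
end

section
/- Let Γ be a two-player game with players x and y that is constant-sum under w* ∈ ℝ^d. Suppose the true behavior σ is a product distribution σ = σ_x ⊗ σ_y that is an ε-Nash equilibrium under w* (for every mixed strategy s_x, u_x(s_x, σ_y | w*) − u_x(σ_x, σ_y | w*) ≤ ε, and symmetrically for player y). If a prediction σ̂ satisfies the standard ICE polytope relative to σ with deviation set Φ = Φ^ext (for every f ∈ Φ^ext, r(f,σ̂) lies in the convex hull of {r(g,σ) : g ∈ Φ^ext}), then the profile of marginal strategies of σ̂ is a 2ε-Nash equilibrium under w*. -/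
open scoped BigOperators

section TwoPlayer

variable {d : ℕ} {Ax Ay : Type} [Fintype Ax] [Fintype Ay] [Nonempty Ax] [Nonempty Ay]

/-- Expected regret features of deviation `f` under joint strategy `σ`. -/
def expExtFeat (ux uy : Ax × Ay → Fin d → ℝ) (σ : Ax × Ay → ℝ)
    (f : Ax ⊕ Ay) : Fin d → ℝ :=
  ∑ a, σ a • extFeat ux uy f a

/-- The profile `(sx, sy)` is an `ε`-Nash equilibrium under `w`. -/
def IsApproxNash (ux uy : Ax × Ay → Fin d → ℝ) (w : Fin d → ℝ)
    (sx : Ax → ℝ) (sy : Ay → ℝ) (ε : ℝ) : Prop :=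
  (∀ tx : Ax → ℝ, (∀ a, 0 ≤ tx a) → ∑ a, tx a = 1 →
    profUtil ux tx sy w - profUtil ux sx sy w ≤ ε) ∧
  (∀ ty : Ay → ℝ, (∀ b, 0 ≤ ty b) → ∑ b, ty b = 1 →
    profUtil uy sx ty w - profUtil uy sx sy w ≤ ε)

/-- Auxiliary lemmas -/

lemma dot_add' {d : ℕ} (x y w : Fin d → ℝ) : dot (x + y) w = dot x w + dot y w := by
  simp [dot, add_mul, Finset.sum_add_distrib]

lemma dot_smul' {d : ℕ} (c : ℝ) (x w : Fin d → ℝ) : dot (c • x) w = c * dot x w := by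
  simp [dot, Finset.mul_sum, mul_assoc]

lemma dot_sub' {d : ℕ} (x y w : Fin d → ℝ) : dot (x - y) w = dot x w - dot y w := by
  simp [dot, sub_mul, Finset.sum_sub_distrib]

lemma dot_sum' {d : ℕ} {α : Type} (s : Finset α) (v : α → Fin d → ℝ) (w : Fin d → ℝ) :
    dot (∑ a ∈ s, v a) w = ∑ a ∈ s, dot (v a) w := by
  unfold dot
  simp only [Finset.sum_apply, Finset.sum_mul]
  exact Finset.sum_comm

open Classical in
/-- Dirac strategy on `b`. -/
noncomputable def delta {α : Type} (b : α) : α → ℝ := fun a => if a = b then 1 else 0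

lemma delta_nonneg {α : Type} (b a : α) : 0 ≤ delta b a := by
  unfold delta; split <;> norm_num

lemma delta_sum {α : Type} [Fintype α] (b : α) : ∑ a, delta b a = 1 := by
  classical
  simp [delta]

lemma expDot (ux uy : Ax × Ay → Fin d → ℝ) (σ : Ax × Ay → ℝ) (f : Ax ⊕ Ay)
    (w : Fin d → ℝ) :
    dot (expExtFeat ux uy σ f) w = ∑ a, σ a * dot (extFeat ux uy f a) w := by
  unfold expExtFeat
  rw [dot_sum']
  simp [dot_smul']

lemma profUtil_delta_left (u : Ax × Ay → Fin d → ℝ) (b : Ax) (sy : Ay → ℝ)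
    (w : Fin d → ℝ) :
    profUtil u (delta b) sy w = ∑ a2, sy a2 * dot (u (b, a2)) w := by
  classical
  unfold profUtil delta
  rw [Fintype.sum_prod_type]
  simp [ite_mul, Finset.sum_ite_eq']

lemma profUtil_delta_right (u : Ax × Ay → Fin d → ℝ) (sx : Ax → ℝ) (b : Ay)
    (w : Fin d → ℝ) :
    profUtil u sx (delta b) w = ∑ a1, sx a1 * dot (u (a1, b)) w := by
  classical
  unfold profUtil delta
  rw [Fintype.sum_prod_type]
  simp [ite_mul, mul_ite, Finset.sum_ite_eq']

lemma profUtil_eq_sum_left (u : Ax × Ay → Fin d → ℝ) (sx : Ax → ℝ) (sy : Ay → ℝ)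
    (w : Fin d → ℝ) :
    profUtil u sx sy w = ∑ a1, sx a1 * profUtil u (delta a1) sy w := by
  simp only [profUtil_delta_left]
  unfold profUtil
  rw [Fintype.sum_prod_type]
  congr 1; ext a1
  rw [Finset.mul_sum]
  congr 1; ext a2; ring

lemma profUtil_eq_sum_right (u : Ax × Ay → Fin d → ℝ) (sx : Ax → ℝ) (sy : Ay → ℝ)
    (w : Fin d → ℝ) :
    profUtil u sx sy w = ∑ a2, sy a2 * profUtil u sx (delta a2) w := by
  simp only [profUtil_delta_right]
  unfold profUtil
  rw [Fintype.sum_prod_type, Finset.sum_comm]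
  congr 1; ext a2
  rw [Finset.mul_sum]
  congr 1; ext a1; ring

lemma expDot_inl (ux uy : Ax × Ay → Fin d → ℝ) (σ : Ax × Ay → ℝ) (b : Ax)
    (w : Fin d → ℝ) :
    dot (expExtFeat ux uy σ (Sum.inl b)) w
      = profUtil ux (delta b) (margY σ) w - ∑ a, σ a * dot (ux a) w := by
  rw [expDot, profUtil_delta_left]
  simp only [extFeat, dot_sub', mul_sub, Finset.sum_sub_distrib]
  congr 1
  rw [Fintype.sum_prod_type, Finset.sum_comm]
  unfold margY
  congr 1; ext a2
  rw [Finset.sum_mul]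

lemma expDot_inr (ux uy : Ax × Ay → Fin d → ℝ) (σ : Ax × Ay → ℝ) (b : Ay)
    (w : Fin d → ℝ) :
    dot (expExtFeat ux uy σ (Sum.inr b)) w
      = profUtil uy (margX σ) (delta b) w - ∑ a, σ a * dot (uy a) w := by
  rw [expDot, profUtil_delta_right]
  simp only [extFeat, dot_sub', mul_sub, Finset.sum_sub_distrib]
  congr 1
  rw [Fintype.sum_prod_type]
  unfold margX
  congr 1; ext a1
  rw [Finset.sum_mul]

/-- In a two-player constant-sum game, if the true behavior is a product
distribution forming an `ε`-Nash equilibrium under `w*`, and `σ̂` satisfies the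
standard ICE polytope relative to it with `Φ = Φ^ext`, then the marginals of `σ̂`
form a `2ε`-Nash equilibrium under `w*`. -/
theorem ICE_external_recovers_approx_nash
    (ux uy : Ax × Ay → Fin d → ℝ) (wstar : Fin d → ℝ) (C : ℝ)
    (hconst : ∀ a : Ax × Ay, dot (ux a) wstar + dot (uy a) wstar = C)
    (σx : Ax → ℝ) (σy : Ay → ℝ)
    (hσx : ∀ a, 0 ≤ σx a) (hσx1 : ∑ a, σx a = 1)
    (hσy : ∀ b, 0 ≤ σy b) (hσy1 : ∑ b, σy b = 1)
    (ε : ℝ)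
    (hnash : IsApproxNash ux uy wstar σx σy ε)
    (σhat : Ax × Ay → ℝ) (hσhat : ∀ a, 0 ≤ σhat a) (hσhat1 : ∑ a, σhat a = 1)
    (hICE : ∀ f : Ax ⊕ Ay,
      expExtFeat ux uy σhat f ∈
        convexHull ℝ (Set.range (expExtFeat ux uy (fun p => σx p.1 * σy p.2)))) :
    IsApproxNash ux uy wstar (margX σhat) (margY σhat) (2 * ε) := by
  classical
  have hmx0 : ∀ a, 0 ≤ margX σhat a := fun a => Finset.sum_nonneg fun b _ => hσhat (a, b)
  have hmy0 : ∀ b, 0 ≤ margY σhat b := fun b => Finset.sum_nonneg fun a _ => hσhat (a, b)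
  have hmx1 : ∑ a, margX σhat a = 1 := by
    unfold margX; rw [← Fintype.sum_prod_type]; exact hσhat1
  have hmy1 : ∑ b, margY σhat b = 1 := by
    unfold margY; rw [Finset.sum_comm, ← Fintype.sum_prod_type]; exact hσhat1
  have hmargYprod : margY (fun p : Ax × Ay => σx p.1 * σy p.2) = σy := by
    funext b
    show (∑ a, σx a * σy b) = σy b
    rw [← Finset.sum_mul, hσx1, one_mul]
  have hmargXprod : margX (fun p : Ax × Ay => σx p.1 * σy p.2) = σx := by
    funext a
    show (∑ b, σx a * σy b) = σx a
    rw [← Finset.mul_sum, hσy1, mul_one]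
  -- every true external regret is at most ε
  have hrange : ∀ g : Ax ⊕ Ay,
      dot (expExtFeat ux uy (fun p => σx p.1 * σy p.2) g) wstar ≤ ε := by
    intro g
    cases g with
    | inl b =>
      rw [expDot_inl, hmargYprod]
      have h := hnash.1 (delta b) (delta_nonneg b) (delta_sum b)
      simpa [profUtil] using h
    | inr b =>
      rw [expDot_inr, hmargXprod]
      have h := hnash.2 (delta b) (delta_nonneg b) (delta_sum b)
      simpa [profUtil] using h
  -- hence, by the ICE constraint, every predicted external regret is at most ε
  have hconv : ∀ f : Ax ⊕ Ay, dot (expExtFeat ux uy σhat f) wstar ≤ ε := by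
    intro f
    have hlin : IsLinearMap ℝ (fun v : Fin d → ℝ => dot v wstar) :=
      ⟨fun x y => dot_add' x y wstar, fun c x => dot_smul' c x wstar⟩
    have hcvx : Convex ℝ {v : Fin d → ℝ | dot v wstar ≤ ε} := convex_halfSpace_le hlin ε
    exact convexHull_min (by rintro v ⟨g, rfl⟩; exact hrange g) hcvx (hICE f)
  have h1 : ∀ b : Ax, profUtil ux (delta b) (margY σhat) wstar
      ≤ (∑ a, σhat a * dot (ux a) wstar) + ε := by
    intro b
    have h := hconv (Sum.inl b)
    rw [expDot_inl] at h
    linarith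
  have h2 : ∀ b : Ay, profUtil uy (margX σhat) (delta b) wstar
      ≤ (∑ a, σhat a * dot (uy a) wstar) + ε := by
    intro b
    have h := hconv (Sum.inr b)
    rw [expDot_inr] at h
    linarith
  -- constant-sum bookkeeping
  have hEC : (∑ a, σhat a * dot (ux a) wstar) + (∑ a, σhat a * dot (uy a) wstar) = C := by
    rw [← Finset.sum_add_distrib]
    calc ∑ a, (σhat a * dot (ux a) wstar + σhat a * dot (uy a) wstar)
        = ∑ a, σhat a * C := by
          apply Finset.sum_congr rfl; intro a _; rw [← mul_add, hconst a]
      _ = C := by rw [← Finset.sum_mul, hσhat1, one_mul]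
  have hprofC : ∀ (s : Ax → ℝ) (t : Ay → ℝ), (∑ a, s a = 1) → (∑ b, t b = 1) →
      profUtil ux s t wstar + profUtil uy s t wstar = C := by
    intro s t hs ht
    unfold profUtil
    rw [← Finset.sum_add_distrib]
    calc ∑ p : Ax × Ay, (s p.1 * t p.2 * dot (ux p) wstar + s p.1 * t p.2 * dot (uy p) wstar)
        = ∑ p : Ax × Ay, s p.1 * t p.2 * C := by
          apply Finset.sum_congr rfl; intro p _; rw [mul_assoc, mul_assoc, ← mul_add, ← mul_add, hconst p, mul_assoc]
      _ = ∑ a, s a * ∑ b, t b * C := by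
          rw [Fintype.sum_prod_type]
          apply Finset.sum_congr rfl; intro a _
          rw [Finset.mul_sum]
          apply Finset.sum_congr rfl; intro b _; ring
      _ = C := by rw [← Finset.sum_mul, hs, one_mul, ← Finset.sum_mul, ht, one_mul]
  -- upper bound for x-deviations
  have hub : ∀ tx : Ax → ℝ, (∀ a, 0 ≤ tx a) → ∑ a, tx a = 1 →
      profUtil ux tx (margY σhat) wstar ≤ (∑ a, σhat a * dot (ux a) wstar) + ε := by
    intro tx htx htx1
    rw [profUtil_eq_sum_left]
    calc ∑ a1, tx a1 * profUtil ux (delta a1) (margY σhat) wstar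
        ≤ ∑ a1, tx a1 * ((∑ a, σhat a * dot (ux a) wstar) + ε) :=
          Finset.sum_le_sum fun a1 _ => mul_le_mul_of_nonneg_left (h1 a1) (htx a1)
      _ = (∑ a, σhat a * dot (ux a) wstar) + ε := by rw [← Finset.sum_mul, htx1, one_mul]
  -- upper bound for y-deviations
  have huby : ∀ ty : Ay → ℝ, (∀ b, 0 ≤ ty b) → ∑ b, ty b = 1 →
      profUtil uy (margX σhat) ty wstar ≤ (∑ a, σhat a * dot (uy a) wstar) + ε := by
    intro ty hty hty1
    rw [profUtil_eq_sum_right]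
    calc ∑ b, ty b * profUtil uy (margX σhat) (delta b) wstar
        ≤ ∑ b, ty b * ((∑ a, σhat a * dot (uy a) wstar) + ε) :=
          Finset.sum_le_sum fun b _ => mul_le_mul_of_nonneg_left (h2 b) (hty b)
      _ = (∑ a, σhat a * dot (uy a) wstar) + ε := by rw [← Finset.sum_mul, hty1, one_mul]
  -- lower bound for the x-value of the marginal profile
  have hlbx : (∑ a, σhat a * dot (ux a) wstar) - ε
      ≤ profUtil ux (margX σhat) (margY σhat) wstar := by
    have hb : ∀ b : Ay, (∑ a, σhat a * dot (ux a) wstar) - ε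
        ≤ profUtil ux (margX σhat) (delta b) wstar := by
      intro b
      have hc := hprofC (margX σhat) (delta b) hmx1 (delta_sum b)
      have h := h2 b
      linarith
    rw [profUtil_eq_sum_right]
    calc (∑ a, σhat a * dot (ux a) wstar) - ε
        = ∑ b, margY σhat b * ((∑ a, σhat a * dot (ux a) wstar) - ε) := by
          rw [← Finset.sum_mul, hmy1, one_mul]
      _ ≤ ∑ b, margY σhat b * profUtil ux (margX σhat) (delta b) wstar :=
          Finset.sum_le_sum fun b _ => mul_le_mul_of_nonneg_left (hb b) (hmy0 b)
  -- lower bound for the y-value of the marginal profile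
  have hlby : (∑ a, σhat a * dot (uy a) wstar) - ε
      ≤ profUtil uy (margX σhat) (margY σhat) wstar := by
    have hb : ∀ b : Ax, (∑ a, σhat a * dot (uy a) wstar) - ε
        ≤ profUtil uy (delta b) (margY σhat) wstar := by
      intro b
      have hc := hprofC (delta b) (margY σhat) (delta_sum b) hmy1
      have h := h1 b
      linarith
    rw [profUtil_eq_sum_left]
    calc (∑ a, σhat a * dot (uy a) wstar) - ε
        = ∑ b, margX σhat b * ((∑ a, σhat a * dot (uy a) wstar) - ε) := by
          rw [← Finset.sum_mul, hmx1, one_mul]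
      _ ≤ ∑ b, margX σhat b * profUtil uy (delta b) (margY σhat) wstar :=
          Finset.sum_le_sum fun b _ => mul_le_mul_of_nonneg_left (hb b) (hmx0 b)
  constructor
  · intro tx htx htx1
    have := hub tx htx htx1
    linarith
  · intro ty hty hty1
    have := huby ty hty hty1
    linarith

end TwoPlayer
end

section
/- Let 𝒜 be a finite nonempty set and let S be a nonempty closed convex set of probability distributions on 𝒜. If σ* maximizes the Shannon entropy H over S, then σ* minimizes over S the worst-case log-loss against an adversary constrained to S: for every σ̂ ∈ S, sup_{σ∈S} H(σ, σ*) ≤ sup_{σ∈S} H(σ, σ̂), where H(σ, σ̂) denotes the cross-entropy (expected log-loss). -/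
open scoped BigOperators ENNReal

/-- Shannon entropy `H(σ) = -∑ σ(a) log σ(a)` (with `0 log 0 = 0`, as
`Real.log 0 = 0`). -/
noncomputable def shannonEntropy {A : Type} [Fintype A] (σ : A → ℝ) : ℝ :=
  -∑ a, σ a * Real.log (σ a)

/-- Cross-entropy `H(σ, σ̂) = ∑ σ(a) · (-log σ̂(a))`, valued in `[0,∞]` with the
conventions `0 · ∞ = 0` and `-log 0 = ∞`. -/
noncomputable def crossEntropy {A : Type} [Fintype A] (σ σhat : A → ℝ) : ℝ≥0∞ :=
  ∑ a, ENNReal.ofReal (σ a) *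
    (if σhat a = 0 then ⊤ else ENNReal.ofReal (-Real.log (σhat a)))

/-!
For `σ ∈ S` and `0 < t < 1` the point `y = (1 - t) σ* + t σ` lies in `S` and has full support
relative to both `σ` and `σ*`. Since `H(·, y)` is affine, `H(y) = (1 - t) H(σ*, y) + t H(σ, y)`;
Gibbs' inequality `H(σ*) ≤ H(σ*, y)` and maximality `H(y) ≤ H(σ*)` then force
`H(σ, y) ≤ H(σ*)`. As `t → 0`, `H(σ, y) → H(σ, σ*)` in `[0, ∞]`, because `q ↦ -log q` is
continuous on `[0, ∞)` into `[0, ∞]` (with value `∞` at `0`). So the worst case against `σ*` is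
at most `H(σ*)`, and by Gibbs again `H(σ*) ≤ H(σ*, σ̂)`, which the adversary can realise by
playing `σ*`.
-/

open Real Set Filter Topology

lemma mul_log_sub_mul_log_le {x y : ℝ} (hx : 0 ≤ x) (hy : 0 < y) :
    x * log y - x * log x ≤ y - x := by
  rcases hx.eq_or_lt with rfl | hx
  · simpa using hy.le
  have h := mul_le_mul_of_nonneg_left (self_sub_one_le_mul_log (div_nonneg hx.le hy.le)) hy.le
  rw [log_div hx.ne' hy.ne'] at h
  field_simp at h
  linarith

lemma eq_zero_and_eq_zero_of_mix_eq_zero {A : Type*} {σ σ' : A → ℝ} (hσ : ∀ a, 0 ≤ σ a)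
    (hσ' : ∀ a, 0 ≤ σ' a) {t : ℝ} (ht : t ∈ Ioo 0 1) {a : A} (h : ((1 - t) • σ' + t • σ) a = 0) :
    σ' a = 0 ∧ σ a = 0 := by
  simp only [Pi.add_apply, Pi.smul_apply, smul_eq_mul] at h
  have h₁ := mul_nonneg (sub_nonneg.2 ht.2.le) (hσ' a)
  have h₂ := mul_nonneg ht.1.le (hσ a)
  exact ⟨(mul_eq_zero.1 (show (1 - t) * σ' a = 0 by linarith)).resolve_left
      (sub_ne_zero.2 ht.2.ne'),
    (mul_eq_zero.1 (show t * σ a = 0 by linarith)).resolve_left ht.1.ne'⟩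

noncomputable def realCrossEntropy {A : Type} [Fintype A] (σ τ : A → ℝ) : ℝ :=
  ∑ a, σ a * -log (τ a)

noncomputable def logLoss (q : ℝ) : ℝ≥0∞ :=
  if q = 0 then ⊤ else ENNReal.ofReal (-log q)

section

variable {A : Type} [Fintype A]

lemma IsProb.le_one {σ : A → ℝ} (h : IsProb σ) (a : A) : σ a ≤ 1 :=
  h.2 ▸ Finset.single_le_sum (fun b _ => h.1 b) (Finset.mem_univ a)

lemma shannonEntropy_eq_realCrossEntropy (σ : A → ℝ) :
    shannonEntropy σ = realCrossEntropy σ σ := by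
  simp [shannonEntropy, realCrossEntropy]

lemma realCrossEntropy_add_smul (s t : ℝ) (σ σ' τ : A → ℝ) :
    realCrossEntropy (s • σ + t • σ') τ = s * realCrossEntropy σ τ + t * realCrossEntropy σ' τ := by
  simp only [realCrossEntropy, Pi.add_apply, Pi.smul_apply, smul_eq_mul, add_mul,
    Finset.sum_add_distrib, Finset.mul_sum, mul_assoc]

lemma crossEntropy_eq_sum_logLoss (σ τ : A → ℝ) :
    crossEntropy σ τ = ∑ a, ENNReal.ofReal (σ a) * logLoss (τ a) :=
  rfl

lemma shannonEntropy_le_realCrossEntropy {σ τ : A → ℝ} (hσ : IsProb σ) (hτ : IsProb τ)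
    (hsupp : ∀ a, τ a = 0 → σ a = 0) :
    shannonEntropy σ ≤ realCrossEntropy σ τ := by
  have hterm : ∀ a, σ a * log (τ a) - σ a * log (σ a) ≤ τ a - σ a := fun a => by
    rcases (hτ.1 a).eq_or_lt with h | h
    · simp [hsupp a h.symm, ← h]
    · exact mul_log_sub_mul_log_le (hσ.1 a) h
  have := Finset.sum_le_sum fun a (_ : a ∈ Finset.univ) => hterm a
  simp only [Finset.sum_sub_distrib, hσ.2, hτ.2, sub_self] at this
  simp only [shannonEntropy, realCrossEntropy, mul_neg, Finset.sum_neg_distrib]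
  linarith

lemma crossEntropy_eq_ofReal {σ τ : A → ℝ} (hσ : IsProb σ) (hτ : IsProb τ)
    (hsupp : ∀ a, τ a = 0 → σ a = 0) :
    crossEntropy σ τ = ENNReal.ofReal (realCrossEntropy σ τ) := by
  have hnonneg : ∀ a ∈ Finset.univ, 0 ≤ σ a * -log (τ a) := fun a _ =>
    mul_nonneg (hσ.1 a) (neg_nonneg.2 (log_nonpos (hτ.1 a) (hτ.le_one a)))
  rw [realCrossEntropy, ENNReal.ofReal_sum_of_nonneg hnonneg, crossEntropy_eq_sum_logLoss]
  refine Finset.sum_congr rfl fun a _ => ?_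
  by_cases h : τ a = 0
  · simp [h, hsupp a h]
  · rw [logLoss, if_neg h, ENNReal.ofReal_mul (hσ.1 a)]

lemma ofReal_shannonEntropy_le_crossEntropy {σ τ : A → ℝ} (hσ : IsProb σ) (hτ : IsProb τ) :
    ENNReal.ofReal (shannonEntropy σ) ≤ crossEntropy σ τ := by
  by_cases hsupp : ∀ a, τ a = 0 → σ a = 0
  · rw [crossEntropy_eq_ofReal hσ hτ hsupp]
    exact ENNReal.ofReal_le_ofReal (shannonEntropy_le_realCrossEntropy hσ hτ hsupp)
  push Not at hsupp
  obtain ⟨a, hτa, hσa⟩ := hsupp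
  have : crossEntropy σ τ = ⊤ := by
    rw [crossEntropy_eq_sum_logLoss, ENNReal.sum_eq_top]
    refine ⟨a, Finset.mem_univ a, ?_⟩
    rw [logLoss, if_pos hτa, ENNReal.mul_top]
    simpa using lt_of_le_of_ne (hσ.1 a) (Ne.symm hσa)
  simp [this]

lemma continuousOn_logLoss : ContinuousOn logLoss (Ici 0) := by
  intro q hq
  rcases (mem_Ici.1 hq).eq_or_lt with rfl | hq
  · refine continuousWithinAt_Ioi_iff_Ici.1 ?_
    have hlim : Tendsto (fun q => ENNReal.ofReal (-log q)) (𝓝[>] 0) (𝓝 ⊤) :=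
      ENNReal.tendsto_ofReal_atTop.comp (tendsto_neg_atBot_atTop.comp tendsto_log_nhdsGT_zero)
    rw [ContinuousWithinAt, show logLoss 0 = ⊤ from if_pos rfl]
    exact hlim.congr' (eventually_nhdsWithin_of_forall fun x hx => (if_neg (ne_of_gt hx)).symm)
  · have hcont : ContinuousAt (fun q => ENNReal.ofReal (-log q)) q :=
      ENNReal.continuous_ofReal.continuousAt.comp (continuousAt_log hq.ne').neg
    refine (hcont.congr (eventually_ne_nhds hq.ne' |>.mono fun x hx => ?_)).continuousWithinAt
    exact (if_neg hx).symm

lemma continuousOn_crossEntropy (σ : A → ℝ) :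
    ContinuousOn (crossEntropy σ) {τ | ∀ a, 0 ≤ τ a} := by
  show ContinuousOn (fun τ : A → ℝ => ∑ a, ENNReal.ofReal (σ a) * logLoss (τ a)) _
  refine continuousOn_finsetSum _ fun a _ => ?_
  exact (ENNReal.continuous_const_mul ENNReal.ofReal_ne_top).comp_continuousOn
    (continuousOn_logLoss.comp (continuous_apply a).continuousOn fun τ hτ => hτ a)

lemma realCrossEntropy_mix_le_shannonEntropy {σ σ' : A → ℝ} (hσ : ∀ a, 0 ≤ σ a) (hσ' : IsProb σ')
    {t : ℝ} (ht : t ∈ Ioo 0 1) (hy : IsProb ((1 - t) • σ' + t • σ))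
    (hmax : shannonEntropy ((1 - t) • σ' + t • σ) ≤ shannonEntropy σ') :
    realCrossEntropy σ ((1 - t) • σ' + t • σ) ≤ shannonEntropy σ' := by
  set y := (1 - t) • σ' + t • σ
  have hgibbs : shannonEntropy σ' ≤ realCrossEntropy σ' y :=
    shannonEntropy_le_realCrossEntropy hσ' hy fun a ha =>
      (eq_zero_and_eq_zero_of_mix_eq_zero hσ hσ'.1 ht ha).1
  have hsplit : shannonEntropy y = (1 - t) * realCrossEntropy σ' y + t * realCrossEntropy σ y := by
    rw [shannonEntropy_eq_realCrossEntropy]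
    exact realCrossEntropy_add_smul _ _ _ _ _
  have := mul_le_mul_of_nonneg_left hgibbs (sub_nonneg.2 ht.2.le)
  exact le_of_mul_le_mul_left (by linarith) ht.1

lemma crossEntropy_le_ofReal_shannonEntropy_of_isMaxOn {S : Set (A → ℝ)}
    (hSprob : ∀ σ ∈ S, IsProb σ) (hSconv : Convex ℝ S) {σstar σ : A → ℝ} (hmem : σstar ∈ S)
    (hmax : IsMaxOn shannonEntropy S σstar) (hσ : σ ∈ S) :
    crossEntropy σ σstar ≤ ENNReal.ofReal (shannonEntropy σstar) := by
  set y : ℝ → A → ℝ := fun t => (1 - t) • σstar + t • σ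
  have hyS : ∀ t ∈ Icc (0 : ℝ) 1, y t ∈ S := fun t ht =>
    hSconv hmem hσ (sub_nonneg.2 ht.2) ht.1 (by ring)
  have hcont : ContinuousWithinAt (fun t => crossEntropy σ (y t)) (Ioo 0 1) 0 :=
    ((continuousOn_crossEntropy σ).comp (by fun_prop : Continuous y).continuousOn
      fun t ht a => (hSprob _ (hyS t ht)).1 a) 0 ⟨le_rfl, zero_le_one⟩ |>.mono Ioo_subset_Icc_self
  have hbound : ∀ t ∈ Ioo (0 : ℝ) 1,
      crossEntropy σ (y t) ≤ ENNReal.ofReal (shannonEntropy σstar) := fun t ht => by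
    have hyt := hSprob _ (hyS t (Ioo_subset_Icc_self ht))
    rw [crossEntropy_eq_ofReal (hSprob σ hσ) hyt fun a ha =>
      (eq_zero_and_eq_zero_of_mix_eq_zero (hSprob σ hσ).1 (hSprob σstar hmem).1 ht ha).2]
    exact ENNReal.ofReal_le_ofReal <| realCrossEntropy_mix_le_shannonEntropy (hSprob σ hσ).1
      (hSprob σstar hmem) ht hyt (hmax (hyS t (Ioo_subset_Icc_self ht)))
  simpa [y] using hcont.closure_le (by simp) continuousWithinAt_const hbound

end

theorem maxent_minimizes_worst_case_log_loss_general
    {A : Type} [Fintype A]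
    (S : Set (A → ℝ)) (hSprob : ∀ σ ∈ S, IsProb σ)
    (hSconv : Convex ℝ S)
    (σstar : A → ℝ) (hmem : σstar ∈ S)
    (hmax : ∀ σ ∈ S, shannonEntropy σ ≤ shannonEntropy σstar) :
    ∀ σhat ∈ S,
      (⨆ σ ∈ S, crossEntropy σ σstar) ≤ ⨆ σ ∈ S, crossEntropy σ σhat := fun σhat hσhat =>
  calc (⨆ σ ∈ S, crossEntropy σ σstar)
      ≤ ENNReal.ofReal (shannonEntropy σstar) := iSup₂_le fun _ hσ =>
        crossEntropy_le_ofReal_shannonEntropy_of_isMaxOn hSprob hSconv hmem hmax hσ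
    _ ≤ crossEntropy σstar σhat :=
        ofReal_shannonEntropy_le_crossEntropy (hSprob σstar hmem) (hSprob σhat hσhat)
    _ ≤ ⨆ σ ∈ S, crossEntropy σ σhat :=
        le_iSup₂ (f := fun σ _ => crossEntropy σ σhat) σstar hmem

/-- The maximum entropy distribution over a nonempty closed convex set `S` of
probability distributions minimizes over `S` the worst-case log-loss against an
adversary constrained to `S`. -/
theorem maxent_minimizes_worst_case_log_loss
    {A : Type} [Fintype A] [Nonempty A]
    (S : Set (A → ℝ)) (hSprob : ∀ σ ∈ S, IsProb σ) (hSne : S.Nonempty)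
    (hSclosed : IsClosed S) (hSconv : Convex ℝ S)
    (σstar : A → ℝ) (hmem : σstar ∈ S)
    (hmax : ∀ σ ∈ S, shannonEntropy σ ≤ shannonEntropy σstar) :
    ∀ σhat ∈ S,
      (⨆ σ ∈ S, crossEntropy σ σstar) ≤ ⨆ σ ∈ S, crossEntropy σ σhat :=
  maxent_minimizes_worst_case_log_loss_general S hSprob hSconv σstar hmem hmax
end

section
/- Strong duality for maximum entropy ICE: let σ be a probability distribution on a finite nonempty set 𝒜, let Φ be a finite nonempty deviation set with regret features r : Φ → 𝒜 → ℝ^d, and let P = {σ̂ : σ̂ a probability distribution on 𝒜 such that for every f ∈ Φ, r(f,σ̂) lies in the convex hull of {r(g,σ) : g ∈ Φ}} (the standard ICE polytope, which contains σ and hence is nonempty). Then max_{σ̂∈P} H(σ̂) = inf_{θ : Φ → ℝ^d} [ Σ_{f∈Φ} max_{g∈Φ} ⟨r(g,σ), θ_f⟩ + log ( Σ_{a∈𝒜} exp( −Σ_{f∈Φ} ⟨r(f,a), θ_f⟩ ) ) ]. -/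
open scoped BigOperators

/-- Membership in the standard ICE polytope relative to `σ`. -/
def InICE {d : ℕ} {A Φ : Type} [Fintype A] (r : Φ → A → Fin d → ℝ)
    (σ σhat : A → ℝ) : Prop :=
  IsProb σhat ∧ ∀ f : Φ, expFeat r σhat f ∈ convexHull ℝ (Set.range (expFeat r σ))

/-- The dual MaxEnt ICE objective. -/
noncomputable def dualObj {d : ℕ} {A Φ : Type} [Fintype A] [Fintype Φ]
    (r : Φ → A → Fin d → ℝ) (σ : A → ℝ) (θ : Φ → Fin d → ℝ) : ℝ :=
  (∑ f : Φ, ⨆ g : Φ, dot (expFeat r σ g) (θ f)) +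
    Real.log (∑ a, Real.exp (-∑ f : Φ, dot (r f a) (θ f)))

/-!
Weak duality is the Gibbs variational inequality `H τ + ∑ₐ τ a * x a ≤ log ∑ₐ exp (x a)`, taken at
`x a = -∑ f, ⟨r(f,a), θ f⟩`, combined with the support-function bound
`⟨m, w⟩ ≤ max_g ⟨r(g,σ), w⟩` for `m` in the convex hull of the `r(g,σ)`.

For strong duality, consider the hypograph of the perturbed primal value
`u ↦ sup {H τ | ∀ f, r(f,τ) - u f ∈ conv r(·,σ)}`. It is convex because entropy is concave, and
closed because the simplex is compact. Strictly separating `(0, t₀)` from it, for any `t₀` above the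
primal value, gives a hyperplane which is non-vertical since `(0, H σ)` lies in the hypograph; its
normal is a dual variable `θ`. Testing the hyperplane at the point of the hypograph given by the
Gibbs distribution of `θ`, where the Gibbs inequality is an equality, gives `dualObj θ < t₀`.
-/

open Finset Real

section Entropy

variable {A : Type} [Fintype A]

theorem IsProb.nonempty {τ : A → ℝ} (hτ : IsProb τ) : Nonempty A := by
  by_contra h
  rw [not_nonempty_iff] at h
  simpa using hτ.2

theorem shannonEntropy_eq_sum_negMulLog (τ : A → ℝ) :
    shannonEntropy τ = ∑ a, negMulLog (τ a) := by
  simp [shannonEntropy, negMulLog]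

theorem continuous_shannonEntropy : Continuous (shannonEntropy (A := A)) := by
  simp_rw [funext shannonEntropy_eq_sum_negMulLog]
  fun_prop

theorem concaveOn_shannonEntropy : ConcaveOn ℝ (Set.Ici 0) (shannonEntropy (A := A)) := by
  refine ⟨convex_Ici 0, fun τ₁ h₁ τ₂ h₂ p q hp hq hpq => ?_⟩
  simp only [shannonEntropy_eq_sum_negMulLog, smul_eq_mul, mul_sum, ← sum_add_distrib]
  exact sum_le_sum fun a _ =>
    concaveOn_negMulLog.2 (Set.mem_Ici.2 (h₁ a)) (Set.mem_Ici.2 (h₂ a)) hp hq hpq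

theorem mul_log_add_negMulLog_le {t p : ℝ} (ht : 0 ≤ t) (hp : 0 < p) :
    t * log p + negMulLog t ≤ p - t := by
  have h := negMulLog_mul (t / p) p
  rw [div_mul_cancel₀ t hp.ne'] at h
  calc t * log p + negMulLog t = p * negMulLog (t / p) := by
        rw [h, negMulLog_def]; field_simp; ring
    _ ≤ p * (1 - t / p) := by gcongr; exact negMulLog_le_one_sub_self (by positivity)
    _ = p - t := by field_simp

end Entropy

section Gibbs

variable {A : Type} [Fintype A]

noncomputable def gibbs (x : A → ℝ) : A → ℝ := fun a => exp (x a) / ∑ b, exp (x b)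

theorem sum_exp_pos [Nonempty A] (x : A → ℝ) : 0 < ∑ a, exp (x a) :=
  sum_pos (fun _ _ => exp_pos _) univ_nonempty

theorem isProb_gibbs [Nonempty A] (x : A → ℝ) : IsProb (gibbs x) :=
  ⟨fun _ => by unfold gibbs; positivity, by
    simp only [gibbs, ← sum_div]; exact div_self (sum_exp_pos x).ne'⟩

theorem log_gibbs [Nonempty A] (x : A → ℝ) (a : A) :
    log (gibbs x a) = x a - log (∑ b, exp (x b)) := by
  rw [gibbs, log_div (exp_pos _).ne' (sum_exp_pos x).ne', log_exp]

theorem shannonEntropy_add_sum_mul_le {τ : A → ℝ} (hτ : IsProb τ) (x : A → ℝ) :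
    shannonEntropy τ + ∑ a, τ a * x a ≤ log (∑ a, exp (x a)) := by
  have := hτ.nonempty
  have key : ∀ a, τ a * log (gibbs x a) + negMulLog (τ a) ≤ gibbs x a - τ a := fun a =>
    mul_log_add_negMulLog_le (hτ.1 a) (by unfold gibbs; exact div_pos (exp_pos _) (sum_exp_pos x))
  have hsum := sum_le_sum fun a (_ : a ∈ univ) => key a
  simp only [log_gibbs, sum_add_distrib, sum_sub_distrib, mul_sub, ← sum_mul, hτ.2,
    (isProb_gibbs x).2, ← shannonEntropy_eq_sum_negMulLog] at hsum
  linarith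

theorem shannonEntropy_gibbs_add_sum_mul [Nonempty A] (x : A → ℝ) :
    shannonEntropy (gibbs x) + ∑ a, gibbs x a * x a = log (∑ a, exp (x a)) := by
  simp only [shannonEntropy, log_gibbs, mul_sub, sum_sub_distrib, ← sum_mul, (isProb_gibbs x).2]
  ring

end Gibbs

theorem dot_eq_dotProduct {d : ℕ} (x w : Fin d → ℝ) : dot x w = x ⬝ᵥ w := rfl

theorem dot_le_iSup_of_mem_convexHull {d : ℕ} {ι : Type*} [Finite ι] {c : ι → Fin d → ℝ}
    {m : Fin d → ℝ} (w : Fin d → ℝ) (hm : m ∈ convexHull ℝ (Set.range c)) :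
    dot m w ≤ ⨆ i, dot (c i) w := by
  obtain ⟨_, ⟨i, rfl⟩, hi⟩ := ((dotProductEquiv ℝ (Fin d) w).convexOn convex_univ)
    |>.exists_ge_of_mem_convexHull (Set.subset_univ _) hm
  simp only [dotProductEquiv_apply_apply, dotProduct_comm w] at hi
  exact hi.trans (le_ciSup (f := fun i => dot (c i) w) (Set.finite_range _).bddAbove i)

theorem exists_eq_sum_dot {d : ℕ} {Φ : Type} [Fintype Φ] (ℓ : (Φ → Fin d → ℝ) →ₗ[ℝ] ℝ) :
    ∃ θ : Φ → Fin d → ℝ, ∀ u, ℓ u = ∑ f, dot (u f) (θ f) := by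
  classical
  refine ⟨fun f => (dotProductEquiv ℝ (Fin d)).symm (ℓ ∘ₗ LinearMap.single ℝ (fun _ ↦ Fin d → ℝ) f),
    fun u => ?_⟩
  conv_lhs => rw [← Finset.univ_sum_single u, map_sum]
  refine sum_congr rfl fun f _ => ?_
  rw [dot_eq_dotProduct, dotProduct_comm, ← dotProductEquiv_apply_apply,
    LinearEquiv.apply_symm_apply]
  rfl

theorem exists_snd_sub_lt_of_notMem {E : Type*} [NormedAddCommGroup E] [NormedSpace ℝ E]
    {S : Set (E × ℝ)} (hconv : Convex ℝ S) (hclosed : IsClosed S) {t₀ t₁ : ℝ}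
    (h₁ : ((0 : E), t₁) ∈ S) (ht : t₁ ≤ t₀) (h₀ : ((0 : E), t₀) ∉ S) :
    ∃ ℓ : StrongDual ℝ E, ∀ p ∈ S, p.2 - ℓ p.1 < t₀ := by
  obtain ⟨F, c, hFS, hFc⟩ := geometric_hahn_banach_closed_point hconv hclosed h₀
  have hsplit : ∀ p : E × ℝ, F p = F (p.1, 0) + p.2 * F (0, 1) := fun p => by
    rw [← smul_eq_mul, ← map_smul, ← map_add]; simp
  have hF0 : F (0, 0) = 0 := by rw [Prod.mk_zero_zero, map_zero]
  set β := F (0, 1)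
  have hc : c < t₀ * β := by simpa [hsplit (0, t₀), hF0] using hFc
  have hβ : 0 < β := by
    have := hFS _ h₁
    rw [hsplit, hF0] at this
    nlinarith
  refine ⟨-β⁻¹ • F.comp (ContinuousLinearMap.inl ℝ E ℝ), fun p hp => ?_⟩
  have hp' := (hFS p hp).trans hc
  rw [hsplit] at hp'
  simp only [smul_apply, ContinuousLinearMap.comp_apply, ContinuousLinearMap.inl_apply,
    smul_eq_mul, neg_mul, sub_neg_eq_add]
  rw [← sub_pos] at hp' ⊢
  have : 0 < β⁻¹ * (t₀ * β - (F (p.1, 0) + p.2 * β)) := mul_pos (inv_pos.2 hβ) hp'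
  convert this using 1
  field_simp
  ring

section ICE

variable {d : ℕ} {A Φ : Type} [Fintype A]

theorem inICE_self (r : Φ → A → Fin d → ℝ) {σ : A → ℝ} (hσ : IsProb σ) : InICE r σ σ :=
  ⟨hσ, fun f => subset_convexHull ℝ _ (Set.mem_range_self f)⟩

theorem expFeat_eq_linearCombination (r : Φ → A → Fin d → ℝ) (τ : A → ℝ) (f : Φ) :
    expFeat r τ f = Fintype.linearCombination ℝ (r f) τ :=
  (Fintype.linearCombination_apply ℝ (r f) τ).symm

theorem continuous_expFeat (r : Φ → A → Fin d → ℝ) (f : Φ) :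
    Continuous fun τ : A → ℝ => expFeat r τ f := by
  unfold expFeat
  fun_prop

theorem sum_mul_sum_dot [Fintype Φ] (r : Φ → A → Fin d → ℝ) (τ : A → ℝ) (θ : Φ → Fin d → ℝ) :
    ∑ a, τ a * ∑ f, dot (r f a) (θ f) = ∑ f, dot (expFeat r τ f) (θ f) := by
  simp only [dot, expFeat, Finset.sum_apply, Pi.smul_apply, smul_eq_mul, mul_sum, sum_mul]
  rw [sum_comm]
  refine sum_congr rfl fun f _ => ?_
  rw [sum_comm]
  exact sum_congr rfl fun k _ => sum_congr rfl fun a _ => by ring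

theorem shannonEntropy_le_dualObj [Fintype Φ] {r : Φ → A → Fin d → ℝ} {σ τ : A → ℝ}
    (hτ : InICE r σ τ) (θ : Φ → Fin d → ℝ) : shannonEntropy τ ≤ dualObj r σ θ := by
  have hgibbs := shannonEntropy_add_sum_mul_le hτ.1 fun a => -∑ f, dot (r f a) (θ f)
  have hsupport : ∑ f, dot (expFeat r τ f) (θ f) ≤ ∑ f, ⨆ g, dot (expFeat r σ g) (θ f) :=
    sum_le_sum fun f _ => dot_le_iSup_of_mem_convexHull (θ f) (hτ.2 f)
  simp only [mul_neg, sum_neg_distrib, sum_mul_sum_dot] at hgibbs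
  rw [dualObj]
  linarith

noncomputable def dualGibbs [Fintype Φ] (r : Φ → A → Fin d → ℝ) (θ : Φ → Fin d → ℝ) : A → ℝ :=
  gibbs fun a => -∑ f, dot (r f a) (θ f)

theorem dualObj_eq_shannonEntropy_dualGibbs_sub [Fintype Φ] [Nonempty A] (r : Φ → A → Fin d → ℝ)
    (σ : A → ℝ) (θ : Φ → Fin d → ℝ) {g : Φ → Φ}
    (hg : ∀ f g', dot (expFeat r σ g') (θ f) ≤ dot (expFeat r σ (g f)) (θ f)) :
    dualObj r σ θ = shannonEntropy (dualGibbs r θ) -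
      ∑ f, dot (expFeat r (dualGibbs r θ) f - expFeat r σ (g f)) (θ f) := by
  have hsup : ∀ f, ⨆ g', dot (expFeat r σ g') (θ f) = dot (expFeat r σ (g f)) (θ f) :=
    fun f => have : Nonempty Φ := ⟨f⟩
      le_antisymm (ciSup_le (hg f)) (le_ciSup (f := fun g' => dot (expFeat r σ g') (θ f))
        (Set.finite_range _).bddAbove (g f))
  have hlog : shannonEntropy (dualGibbs r θ) - ∑ f, dot (expFeat r (dualGibbs r θ) f) (θ f) =
      log (∑ a, exp (-∑ f, dot (r f a) (θ f))) := by
    have h := shannonEntropy_gibbs_add_sum_mul fun a => -∑ f, dot (r f a) (θ f)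
    simp only [mul_neg, sum_neg_distrib, sum_mul_sum_dot, ← sub_eq_add_neg] at h
    exact h
  rw [dualObj, ← hlog]
  simp_rw [hsup, dot_eq_dotProduct, sub_dotProduct, sum_sub_distrib]
  ring

def perturbedHypograph (r : Φ → A → Fin d → ℝ) (σ : A → ℝ) : Set ((Φ → Fin d → ℝ) × ℝ) :=
  {p | ∃ τ ∈ stdSimplex ℝ A, p.2 ≤ shannonEntropy τ ∧
    ∀ f, expFeat r τ f - p.1 f ∈ convexHull ℝ (Set.range (expFeat r σ))}

theorem convex_perturbedHypograph (r : Φ → A → Fin d → ℝ) (σ : A → ℝ) :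
    Convex ℝ (perturbedHypograph r σ) := by
  rintro ⟨u₁, t₁⟩ ⟨τ₁, hτ₁, ht₁, hu₁⟩ ⟨u₂, t₂⟩ ⟨τ₂, hτ₂, ht₂, hu₂⟩ a b ha hb hab
  refine ⟨a • τ₁ + b • τ₂, convex_stdSimplex ℝ A hτ₁ hτ₂ ha hb hab, ?_, fun f => ?_⟩
  · calc a * t₁ + b * t₂ ≤ a * shannonEntropy τ₁ + b * shannonEntropy τ₂ := by gcongr
      _ ≤ shannonEntropy (a • τ₁ + b • τ₂) :=
        concaveOn_shannonEntropy.2 (fun x => hτ₁.1 x) (fun x => hτ₂.1 x) ha hb hab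
  · have hcomb : expFeat r (a • τ₁ + b • τ₂) f - (a • u₁ f + b • u₂ f) =
        a • (expFeat r τ₁ f - u₁ f) + b • (expFeat r τ₂ f - u₂ f) := by
      simp only [expFeat_eq_linearCombination, map_add, map_smul, smul_sub]
      abel
    have h := convex_convexHull ℝ _ (hu₁ f) (hu₂ f) ha hb hab
    rwa [← hcomb] at h

theorem isClosed_perturbedHypograph [Fintype Φ] (r : Φ → A → Fin d → ℝ) (σ : A → ℝ) :
    IsClosed (perturbedHypograph r σ) := by
  have hC : IsClosed (convexHull ℝ (Set.range (expFeat r σ))) :=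
    (Set.finite_range _).isClosed_convexHull (𝕜 := ℝ)
  have hT : IsClosed {p : stdSimplex ℝ A × ((Φ → Fin d → ℝ) × ℝ) |
      p.2.2 ≤ shannonEntropy p.1.1 ∧
        ∀ f, expFeat r p.1.1 f - p.2.1 f ∈ convexHull ℝ (Set.range (expFeat r σ))} := by
    simp only [Set.ofPred_and, Set.ofPred_forall]
    refine (isClosed_le (by fun_prop) (continuous_shannonEntropy.comp (by fun_prop))).inter
      (isClosed_iInter fun f => hC.preimage ?_)
    exact ((continuous_expFeat r f).comp (by fun_prop)).sub (by fun_prop)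
  convert isClosedMap_snd_of_compactSpace _ hT using 1
  ext ⟨u, t⟩
  simp [perturbedHypograph, and_left_comm]

theorem exists_dualObj_lt [Fintype Φ] {r : Φ → A → Fin d → ℝ} {σ : A → ℝ} (hσ : IsProb σ)
    {t₀ : ℝ} (h : ∀ τ, InICE r σ τ → shannonEntropy τ < t₀) : ∃ θ, dualObj r σ θ < t₀ := by
  have := hσ.nonempty
  have hσσ := inICE_self r hσ
  obtain ⟨ℓ, hℓ⟩ := exists_snd_sub_lt_of_notMem (convex_perturbedHypograph r σ)
    (isClosed_perturbedHypograph r σ) (t₁ := shannonEntropy σ)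
    ⟨σ, hσ, le_rfl, by simpa using hσσ.2⟩ (h σ hσσ).le
    fun ⟨τ, hτ, ht, hC⟩ => (h τ ⟨hτ, by simpa using hC⟩).not_ge ht
  obtain ⟨θ, hθ⟩ := exists_eq_sum_dot ℓ.toLinearMap
  choose g hg using fun f : Φ =>
    have : Nonempty Φ := ⟨f⟩
    Finite.exists_max fun g => dot (expFeat r σ g) (θ f)
  refine ⟨θ, ?_⟩
  have hmem : ((fun f => expFeat r (dualGibbs r θ) f - expFeat r σ (g f)),
      shannonEntropy (dualGibbs r θ)) ∈ perturbedHypograph r σ :=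
    ⟨dualGibbs r θ, isProb_gibbs _, le_rfl, fun f => by
      simpa using subset_convexHull ℝ _ (Set.mem_range_self (g f))⟩
  rw [dualObj_eq_shannonEntropy_dualGibbs_sub r σ θ hg]
  simpa [← hθ] using hℓ _ hmem

end ICE

theorem maxent_ICE_strong_duality_general
    {d : ℕ} {A Φ : Type} [Fintype A] [Fintype Φ]
    (r : Φ → A → Fin d → ℝ) (σ : A → ℝ) (hσ : IsProb σ) :
    (⨆ τ : {τ : A → ℝ // InICE r σ τ}, shannonEntropy τ.1) =
      ⨅ θ : Φ → Fin d → ℝ, dualObj r σ θ := by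
  have hσσ := inICE_self r hσ
  have : Nonempty {τ : A → ℝ // InICE r σ τ} := ⟨⟨σ, hσσ⟩⟩
  have hbdd : BddAbove (Set.range fun τ : {τ : A → ℝ // InICE r σ τ} => shannonEntropy τ.1) :=
    ⟨dualObj r σ 0, by rintro _ ⟨τ, rfl⟩; exact shannonEntropy_le_dualObj τ.2 0⟩
  refine le_antisymm (le_ciInf fun θ => ciSup_le fun τ => shannonEntropy_le_dualObj τ.2 θ)
    (le_of_forall_pos_lt_add fun ε hε => ?_)
  obtain ⟨θ, hθ⟩ := exists_dualObj_lt hσ fun τ hτ =>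
    (le_ciSup hbdd ⟨τ, hτ⟩).trans_lt (lt_add_of_pos_right _ hε)
  exact (ciInf_le ⟨_, by rintro _ ⟨θ', rfl⟩; exact shannonEntropy_le_dualObj hσσ θ'⟩ θ).trans_lt hθ

/-- Strong duality for maximum entropy ICE: the maximal entropy over the standard
ICE polytope equals the infimum of the dual objective. -/
theorem maxent_ICE_strong_duality
    {d : ℕ} {A Φ : Type} [Fintype A] [Nonempty A] [Fintype Φ] [Nonempty Φ]
    (r : Φ → A → Fin d → ℝ) (σ : A → ℝ) (hσ : IsProb σ) :
    (⨆ τ : {τ : A → ℝ // InICE r σ τ}, shannonEntropy τ.1) =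
      ⨅ θ : Φ → Fin d → ℝ, dualObj r σ θ :=
  maxent_ICE_strong_duality_general r σ hσ
end

section
/- Sample complexity, dimension-dependent version: let X_1,…,X_T be i.i.d. S-valued random variables with common law μ, and suppose that for every f ∈ Φ and every coordinate k ∈ {1,…,d} the function s ↦ ⟨r(f,s), e_k⟩ takes values in an interval of length at most Δ > 0. Fix ε > 0 and δ ∈ (0,1). If T ≥ (1/(2ε²)) · log(2·|Φ|·d/δ), then with probability at least 1 − δ the following holds simultaneously for all f ∈ Φ and all w ∈ ℝ^d: (1/T) Σ_{t=1}^T ⟨r(f, X_t), w⟩ ≤ E_{s∼μ}[⟨r(f,s), w⟩] + ε·Δ·‖w‖₁. -/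
open scoped BigOperators
open MeasureTheory ProbabilityTheory

/-!
For a fixed deviation `f` and coordinate `k`, the centred samples `r f (X t) k - E_μ[r f · k]` are
independent and take values in an interval of length `Δ`, so Hoeffding's inequality bounds the
probability that their sum deviates by `T ε Δ` (in either direction) by `2 exp (-2 T ε²)`. A union
bound over the `|Φ| d` pairs `(f, k)` makes the failure probability at most `δ`. On the remaining
event every coordinate of the empirical mean of `r f` is within `ε Δ` of its expectation, and since
the regret is linear in `w`, Hölder's inequality (`ℓ^∞` against `ℓ¹`) gives the bound for all `w`
at once.
-/

open Real

lemma measureReal_sum_sub_integral_ge_le {S Ω ι : Type*} [MeasurableSpace S] [MeasurableSpace Ω]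
    [Fintype ι] {P : Measure Ω} [IsProbabilityMeasure P] {μ : Measure S} {X : ι → Ω → S}
    (hmeas : ∀ i, Measurable (X i)) (hindep : iIndepFun X P) (hident : ∀ i, P.map (X i) = μ)
    {g : S → ℝ} (hg : Measurable g) {a b : ℝ} (hab : ∀ s, g s ∈ Set.Icc a b) {u : ℝ}
    (hu : 0 ≤ u) :
    P.real {ω | u ≤ ∑ i, (g (X i ω) - ∫ s, g s ∂μ)} ≤
      exp (-2 * u ^ 2 / (Fintype.card ι * (b - a) ^ 2)) := by
  have hmean : ∀ i, P[fun ω ↦ g (X i ω)] = ∫ s, g s ∂μ := fun i ↦ by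
    rw [← hident i, integral_map (hmeas i).aemeasurable hg.aestronglyMeasurable]
  have hsubG : ∀ i ∈ Finset.univ, HasSubgaussianMGF (fun ω ↦ g (X i ω) - ∫ s, g s ∂μ)
      ((‖b - a‖₊ / 2) ^ 2) P := fun i _ ↦ by
    simpa only [hmean] using hasSubgaussianMGF_of_mem_Icc (X := fun ω ↦ g (X i ω)) (μ := P)
      (hg.comp (hmeas i)).aemeasurable (ae_of_all _ fun ω ↦ hab _)
  have hhoeffding := HasSubgaussianMGF.measure_sum_ge_le_of_iIndepFun
    (hindep.comp (fun _ s ↦ g s - ∫ s, g s ∂μ) fun _ ↦ hg.sub_const _) hsubG hu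
  refine hhoeffding.trans_eq (congrArg exp ?_)
  simp only [Finset.sum_const, Finset.card_univ, nsmul_eq_mul]
  push_cast
  rw [norm_eq_abs, div_pow, sq_abs,
    show 2 * (Fintype.card ι * ((b - a) ^ 2 / 2 ^ 2)) = Fintype.card ι * (b - a) ^ 2 / 2 by ring,
    div_div_eq_mul_div]
  ring

lemma measureReal_abs_sum_sub_integral_ge_le {S Ω ι : Type*} [MeasurableSpace S]
    [MeasurableSpace Ω] [Fintype ι] {P : Measure Ω} [IsProbabilityMeasure P] {μ : Measure S}
    {X : ι → Ω → S} (hmeas : ∀ i, Measurable (X i)) (hindep : iIndepFun X P)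
    (hident : ∀ i, P.map (X i) = μ) {g : S → ℝ} (hg : Measurable g) {a b : ℝ}
    (hab : ∀ s, g s ∈ Set.Icc a b) {u : ℝ} (hu : 0 ≤ u) :
    P.real {ω | u ≤ |∑ i, (g (X i ω) - ∫ s, g s ∂μ)|} ≤
      2 * exp (-2 * u ^ 2 / (Fintype.card ι * (b - a) ^ 2)) := by
  have hupper := measureReal_sum_sub_integral_ge_le hmeas hindep hident hg hab hu
  have hlower := measureReal_sum_sub_integral_ge_le hmeas hindep hident hg.neg (a := -b) (b := -a)
    (fun s ↦ ⟨neg_le_neg (hab s).2, neg_le_neg (hab s).1⟩) hu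
  rw [neg_sub_neg] at hlower
  calc P.real {ω | u ≤ |∑ i, (g (X i ω) - ∫ s, g s ∂μ)|}
      ≤ P.real ({ω | u ≤ ∑ i, (g (X i ω) - ∫ s, g s ∂μ)} ∪
          {ω | u ≤ ∑ i, ((-g) (X i ω) - ∫ s, (-g) s ∂μ)}) := by
        refine measureReal_mono fun ω (hω : u ≤ |_|) ↦ ?_
        have hsum : ∑ i, ((-g) (X i ω) - ∫ s, (-g) s ∂μ) = -∑ i, (g (X i ω) - ∫ s, g s ∂μ) := by
          simp only [Pi.neg_apply, integral_neg, ← Finset.sum_neg_distrib, neg_sub_neg, neg_sub]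
        rcases le_abs.1 hω with h | h
        · exact Or.inl h
        · exact Or.inr (show u ≤ _ from hsum ▸ h)
    _ ≤ _ := (measureReal_union_le _ _).trans (by linarith)

lemma one_sub_le_measureReal_forall_abs_sum_sub_integral_lt {S Ω ι κ : Type*}
    [MeasurableSpace S] [MeasurableSpace Ω] [Fintype ι] [Fintype κ] {P : Measure Ω}
    [IsProbabilityMeasure P] {μ : Measure S} {X : ι → Ω → S} (hmeas : ∀ i, Measurable (X i))
    (hindep : iIndepFun X P) (hident : ∀ i, P.map (X i) = μ) {g : κ → S → ℝ}
    (hg : ∀ j, Measurable (g j)) {Δ : ℝ} (hrange : ∀ j, ∃ c, ∀ s, g j s ∈ Set.Icc c (c + Δ))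
    {u : ℝ} (hu : 0 ≤ u) :
    1 - 2 * Fintype.card κ * exp (-2 * u ^ 2 / (Fintype.card ι * Δ ^ 2)) ≤
      P.real {ω | ∀ j, |∑ i, (g j (X i ω) - ∫ s, g j s ∂μ)| < u} := by
  let B : κ → Set Ω := fun j ↦ {ω | u ≤ |∑ i, (g j (X i ω) - ∫ s, g j s ∂μ)|}
  have hB : ∀ j, P.real (B j) ≤ 2 * exp (-2 * u ^ 2 / (Fintype.card ι * Δ ^ 2)) := fun j ↦ by
    obtain ⟨c, hc⟩ := hrange j
    simpa only [add_sub_cancel_left] using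
      measureReal_abs_sum_sub_integral_ge_le hmeas hindep hident (hg j) hc hu
  have hBmeas : MeasurableSet (⋃ j, B j) :=
    MeasurableSet.iUnion fun j ↦ measurableSet_le measurable_const <| by
      have hgj := hg j
      fun_prop
  have hunion : P.real (⋃ j, B j) ≤
      2 * Fintype.card κ * exp (-2 * u ^ 2 / (Fintype.card ι * Δ ^ 2)) := by
    refine (measureReal_iUnion_fintype_le B).trans ((Finset.sum_le_sum fun j _ ↦ hB j).trans_eq ?_)
    simp only [Finset.sum_const, Finset.card_univ, nsmul_eq_mul]
    ring
  have hcompl : (⋃ j, B j)ᶜ = {ω | ∀ j, |∑ i, (g j (X i ω) - ∫ s, g j s ∂μ)| < u} := by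
    ext ω
    simp [B]
  rw [← hcompl, measureReal_compl hBmeas, probReal_univ]
  linarith

lemma dot_le_dot_add_of_abs_sub_le {d : ℕ} {x y : Fin d → ℝ} {a : ℝ}
    (h : ∀ k, |x k - y k| ≤ a) (w : Fin d → ℝ) :
    dot x w ≤ dot y w + a * ∑ k, |w k| := by
  rw [dot, dot, Finset.mul_sum, ← Finset.sum_add_distrib]
  refine Finset.sum_le_sum fun k _ ↦ ?_
  have hk : (x k - y k) * w k ≤ a * |w k| := (le_abs_self _).trans
    ((abs_mul _ _).trans_le (mul_le_mul_of_nonneg_right (h k) (abs_nonneg _)))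
  linarith [sub_mul (x k) (y k) (w k)]

lemma mul_sum_dot {d : ℕ} {ι : Type*} (c : ℝ) (s : Finset ι) (x : ι → Fin d → ℝ)
    (w : Fin d → ℝ) : c * ∑ i ∈ s, dot (x i) w = dot (fun k ↦ c * ∑ i ∈ s, x i k) w := by
  simp only [dot, Finset.mul_sum, Finset.sum_mul]
  rw [Finset.sum_comm]
  ring_nf

lemma integral_dot {d : ℕ} {S : Type*} [MeasurableSpace S] {μ : Measure S} {F : S → Fin d → ℝ}
    (hF : ∀ k, Integrable (fun s ↦ F s k) μ) (w : Fin d → ℝ) :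
    ∫ s, dot (F s) w ∂μ = dot (fun k ↦ ∫ s, F s k ∂μ) w := by
  simp only [dot]
  rw [integral_finsetSum _ fun k _ ↦ (hF k).mul_const _]
  simp only [integral_mul_const]

lemma abs_mul_sum_sub {ι : Type*} [Fintype ι] [Nonempty ι] (z : ι → ℝ) (m : ℝ) :
    |1 / Fintype.card ι * ∑ i, z i - m| = |∑ i, (z i - m)| / Fintype.card ι := by
  have hcard : (0 : ℝ) < Fintype.card ι := Nat.cast_pos.2 Fintype.card_pos
  rw [Finset.sum_sub_distrib, Finset.sum_const, Finset.card_univ, nsmul_eq_mul,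
    eq_div_iff hcard.ne', ← abs_of_pos hcard, ← abs_mul, abs_of_pos hcard]
  congr 1
  field_simp

lemma mul_sum_dot_le_integral_dot_add {d : ℕ} {S ι : Type*} [MeasurableSpace S] [Fintype ι]
    [Nonempty ι] {μ : Measure S} {F : S → Fin d → ℝ} (hF : ∀ k, Integrable (fun s ↦ F s k) μ)
    {x : ι → S} {a : ℝ} (hdev : ∀ k, |∑ i, (F (x i) k - ∫ s, F s k ∂μ)| ≤ Fintype.card ι * a)
    (w : Fin d → ℝ) :
    1 / Fintype.card ι * ∑ i, dot (F (x i)) w ≤ ∫ s, dot (F s) w ∂μ + a * ∑ k, |w k| := by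
  rw [mul_sum_dot, integral_dot hF]
  refine dot_le_dot_add_of_abs_sub_le (fun k ↦ ?_) w
  rw [abs_mul_sum_sub, div_le_iff₀ (Nat.cast_pos.2 Fintype.card_pos), mul_comm]
  exact hdev k

lemma pos_and_mul_exp_le_of_log_le {n ε δ T : ℝ} (hn : 1 ≤ n) (hε : 0 < ε) (hδ0 : 0 < δ)
    (hδ1 : δ < 1) (hT : 1 / (2 * ε ^ 2) * log (2 * n / δ) ≤ T) :
    0 < T ∧ 2 * n * exp (-2 * T * ε ^ 2) ≤ δ := by
  rw [one_div, inv_mul_le_iff₀ (by positivity)] at hT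
  have hlog_pos : 0 < log (2 * n / δ) := log_pos ((one_lt_div hδ0).2 (by linarith))
  refine ⟨by nlinarith, ?_⟩
  rw [log_le_iff_le_exp (by positivity), div_le_iff₀ hδ0] at hT
  calc 2 * n * exp (-2 * T * ε ^ 2) ≤ exp (2 * ε ^ 2 * T) * δ * exp (-2 * T * ε ^ 2) := by gcongr
    _ = δ * exp (2 * ε ^ 2 * T + -2 * T * ε ^ 2) := by rw [exp_add]; ring
    _ = δ := by rw [show 2 * ε ^ 2 * T + -2 * T * ε ^ 2 = 0 by ring, exp_zero, mul_one]

theorem sample_complexity_dimension_dependent_general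
    {d : ℕ} {S : Type} [Fintype S] [MeasurableSpace S]
    [MeasurableSingletonClass S]
    {Φ : Type} [Fintype Φ] [Nonempty Φ]
    (r : Φ → S → Fin d → ℝ)
    {Ω : Type} [MeasurableSpace Ω] (P : Measure Ω) [IsProbabilityMeasure P]
    (T : ℕ) (X : Fin T → Ω → S)
    (hmeas : ∀ t, Measurable (X t))
    (hindep : iIndepFun X P)
    (μ : Measure S) [IsProbabilityMeasure μ]
    (hident : ∀ t, Measure.map (X t) P = μ)
    (Δ : ℝ) (hΔ : 0 < Δ)
    (hrange : ∀ (f : Φ) (k : Fin d), ∃ c : ℝ, ∀ s : S,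
      c ≤ r f s k ∧ r f s k ≤ c + Δ)
    (ε : ℝ) (hε : 0 < ε) (δ : ℝ) (hδ0 : 0 < δ) (hδ1 : δ < 1)
    (hT : (1 / (2 * ε ^ 2)) *
      Real.log (2 * (Fintype.card Φ : ℝ) * (d : ℝ) / δ) ≤ (T : ℝ)) :
    ENNReal.ofReal (1 - δ) ≤
      P {ω | ∀ (f : Φ) (w : Fin d → ℝ),
        (1 / (T : ℝ)) * ∑ t : Fin T, dot (r f (X t ω)) w ≤
          (∫ s, dot (r f s) w ∂μ) + ε * Δ * (∑ k, |w k|)} := by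
  obtain rfl | hd := Nat.eq_zero_or_pos d
  · simpa [dot] using ENNReal.ofReal_le_one.2 (by linarith : 1 - δ ≤ 1)
  rw [mul_assoc] at hT
  obtain ⟨hTpos, hsize⟩ := pos_and_mul_exp_le_of_log_le
    (one_le_mul_of_one_le_of_one_le (by exact_mod_cast Fintype.card_pos) (by exact_mod_cast hd))
    hε hδ0 hδ1 hT
  have : Nonempty (Fin T) := Fin.pos_iff_nonempty.1 (by exact_mod_cast hTpos)
  have hgood := one_sub_le_measureReal_forall_abs_sum_sub_integral_lt hmeas hindep hident
    (g := fun q : Φ × Fin d ↦ fun s ↦ r q.1 s q.2) (fun _ ↦ measurable_of_finite _)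
    (fun q ↦ hrange q.1 q.2) (u := T * (ε * Δ)) (by positivity)
  have hexponent : -2 * (T * (ε * Δ)) ^ 2 / (T * Δ ^ 2) = -2 * T * ε ^ 2 := by field_simp
  simp only [Fintype.card_fin, Fintype.card_prod, Nat.cast_mul, hexponent] at hgood
  rw [← ofReal_measureReal]
  refine ENNReal.ofReal_le_ofReal ((by linarith : 1 - δ ≤ _).trans (hgood.trans ?_))
  refine measureReal_mono fun ω hω f w ↦ ?_
  simpa using mul_sum_dot_le_integral_dot_add (fun k ↦ Integrable.of_finite) (x := fun t ↦ X t ω)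
    (fun k ↦ by simpa using (hω (f, k)).le) w

/-- Sample complexity, dimension-dependent version: with
`T ≥ (1/(2ε²)) log(2|Φ|d/δ)` i.i.d. observations, with probability at least
`1 - δ`, simultaneously for all deviations `f ∈ Φ` and all `w ∈ ℝ^d` the
empirical regret exceeds the expected regret by at most `ε·Δ·‖w‖₁`. -/
theorem sample_complexity_dimension_dependent
    {d : ℕ} {S : Type} [Fintype S] [Nonempty S] [MeasurableSpace S]
    [MeasurableSingletonClass S]
    {Φ : Type} [Fintype Φ] [Nonempty Φ]
    (r : Φ → S → Fin d → ℝ)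
    {Ω : Type} [MeasurableSpace Ω] (P : Measure Ω) [IsProbabilityMeasure P]
    (T : ℕ) (X : Fin T → Ω → S)
    (hmeas : ∀ t, Measurable (X t))
    (hindep : iIndepFun X P)
    (μ : Measure S) [IsProbabilityMeasure μ]
    (hident : ∀ t, Measure.map (X t) P = μ)
    (Δ : ℝ) (hΔ : 0 < Δ)
    (hrange : ∀ (f : Φ) (k : Fin d), ∃ c : ℝ, ∀ s : S,
      c ≤ r f s k ∧ r f s k ≤ c + Δ)
    (ε : ℝ) (hε : 0 < ε) (δ : ℝ) (hδ0 : 0 < δ) (hδ1 : δ < 1)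
    (hT : (1 / (2 * ε ^ 2)) *
      Real.log (2 * (Fintype.card Φ : ℝ) * (d : ℝ) / δ) ≤ (T : ℝ)) :
    ENNReal.ofReal (1 - δ) ≤
      P {ω | ∀ (f : Φ) (w : Fin d → ℝ),
        (1 / (T : ℝ)) * ∑ t : Fin T, dot (r f (X t ω)) w ≤
          (∫ s, dot (r f s) w ∂μ) + ε * Δ * (∑ k, |w k|)} :=
  sample_complexity_dimension_dependent_general r P T X hmeas hindep μ hident Δ hΔ hrange ε hε δ hδ0
    hδ1 hT
end
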